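/- Let F = ⟨Tree, ⊴, Choice, R, R_e⟩ be a jstit frame for Ag and let CS be a constant specification. Then every model M ∈ Mod_CS({F}) validates every formula A with ⊢_CS A if and only if F is regular. -/

import Mathlib

/-! Preliminaries: temporal frames, stit frames, jstit frames, the language of
JA-STIT, jstit models, satisfaction, and the Hilbert system Σ_D(CS). -/

/-- A temporal frame: a nonempty set of moments with a partial order satisfying
historical connection and no backward branching. -/
structure TemporalFrame (Mo : Type) : Type where
  le : Mo → Mo → Prop
  le_refl : ∀ m, le m m
  le_antisymm : ∀ {m m'}, le m m' → le m' m → m = m'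
  le_trans : ∀ {m1 m2 m3}, le m1 m2 → le m2 m3 → le m1 m3
  nonempty : Nonempty Mo
  hist_conn : ∀ m m1, ∃ m2, le m2 m ∧ le m2 m1
  no_backward : ∀ m m1 m2, le m1 m → le m2 m → le m1 m2 ∨ le m2 m1

namespace TemporalFrame

variable {Mo : Type} (T : TemporalFrame Mo)

/-- The strict companion of the temporal order. -/
def lt (m m' : Mo) : Prop := T.le m m' ∧ m ≠ m'

/-- A history is a maximal chain of moments w.r.t. the temporal order. -/
def IsHistory (h : Set Mo) : Prop :=
  IsChain T.le h ∧ ∀ h' : Set Mo, IsChain T.le h' → h ⊆ h' → h' = h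

/-- `T.H m` is the set of histories passing through the moment `m`. -/
def H (m : Mo) : Set (Set Mo) := { h | T.IsHistory h ∧ m ∈ h }

/-- Histories `h` and `g` are undivided at `m`. -/
def Undiv (m : Mo) (h g : Set Mo) : Prop := ∃ m', T.lt m m' ∧ m' ∈ h ∧ m' ∈ g

/-- `m'` is an immediate successor of `m`. -/
def Next (m m' : Mo) : Prop := T.lt m m' ∧ ∀ m'', T.lt m'' m' → T.le m'' m

/-- Mixed successor condition on (the temporal part of) a frame. -/
def MixSucc : Prop :=
  ∀ m m1 : Mo,
    (T.lt m m1 → ∃ m2, T.le m2 m1 ∧ T.Next m m2) ∨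
    (∀ h ∈ T.H m, ∀ g ∈ T.H m, T.Undiv m h g)

end TemporalFrame

/-- A stit frame for an agent community `Ag`: a temporal frame together with a choice
function assigning to each moment and agent a partition of the histories through that
moment, subject to no choice between undivided histories and independence of agents. -/
structure StitFrame (Mo : Type) (Ag : Type) extends TemporalFrame Mo where
  choice : Mo → Ag → Set (Set (Set Mo))
  choice_cell_nonempty : ∀ m j C, C ∈ choice m j → C.Nonempty
  choice_cell_sub : ∀ m j C, C ∈ choice m j → C ⊆ toTemporalFrame.H m
  choice_cover : ∀ m j h, h ∈ toTemporalFrame.H m → ∃ C ∈ choice m j, h ∈ C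
  choice_disjoint : ∀ m j C C', C ∈ choice m j → C' ∈ choice m j →
    (C ∩ C').Nonempty → C = C'
  no_choice_undiv : ∀ m j h h', h ∈ toTemporalFrame.H m → h' ∈ toTemporalFrame.H m →
    toTemporalFrame.Undiv m h h' → ∀ C ∈ choice m j, h ∈ C → h' ∈ C
  independence : ∀ m (f : Ag → Set (Set Mo)), (∀ j, f j ∈ choice m j) →
    (⋂ j, f j).Nonempty

/-- A justification stit (jstit) frame for `Ag`: a stit frame together with two
epistemic preorders `R ⊆ R_e`, with the temporal order included in `R`. -/
structure JstitFrame (Mo : Type) (Ag : Type) extends StitFrame Mo Ag where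
  R : Mo → Mo → Prop
  Re : Mo → Mo → Prop
  R_refl : ∀ m, R m m
  R_trans : ∀ {m1 m2 m3}, R m1 m2 → R m2 m3 → R m1 m3
  Re_refl : ∀ m, Re m m
  Re_trans : ∀ {m1 m2 m3}, Re m1 m2 → Re m2 m3 → Re m1 m3
  R_sub_Re : ∀ {m m'}, R m m' → Re m m'
  le_sub_R : ∀ {m m'}, le m m' → R m m'

namespace JstitFrame

variable {Mo : Type} {Ag : Type} (F : JstitFrame Mo Ag)

/-- The family `Θ_m` of subsets of the set of moments associated with a moment `m`. -/
def Theta (m : Mo) : Set (Set Mo) :=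
  { S | m ∈ S ∧
    (∀ m1 m2, m1 ∈ S → F.Re m1 m2 → m2 ∈ S) ∧
    (∀ m1, (∀ h ∈ F.toTemporalFrame.H m1,
        ∃ m2 ∈ h, F.toTemporalFrame.Next m1 m2 ∧ m2 ∈ S) → m1 ∈ S) ∧
    (∀ m1, m1 ∈ S →
      (∀ m2, F.toTemporalFrame.lt m2 m1 →
        ∃ m3, F.toTemporalFrame.lt m2 m3 ∧ F.toTemporalFrame.lt m3 m1) →
      ∃ m4, F.toTemporalFrame.lt m4 m1 ∧ m4 ∈ S) }

/-- A jstit frame is unirelational iff `R_e ⊆ R`. -/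
def Unirelational : Prop := ∀ m m', F.Re m m' → F.R m m'

/-- Regularity of a jstit frame. -/
def Regular : Prop :=
  ∀ m m1 : Mo, F.toTemporalFrame.lt m m1 →
    (∃ S : Set Mo,
      (∀ m0, F.toTemporalFrame.lt m m0 → F.le m0 m1 → S ∈ F.Theta m0) ∧
      m ∉ S ∧
      ∃ h' ∈ F.toTemporalFrame.H m,
        (∀ g ∈ F.toTemporalFrame.H m1, ¬ F.toTemporalFrame.Undiv m h' g) ∧
        (∀ m' ∈ h', F.toTemporalFrame.Next m m' → m' ∉ S)) →
    ∃ m2, F.le m2 m1 ∧ F.toTemporalFrame.Next m m2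

end JstitFrame

/-- Proof polynomials over proof variables `PVar` and proof constants `PConst`. -/
inductive Pol (PVar PConst : Type) : Type
  | var : PVar → Pol PVar PConst
  | const : PConst → Pol PVar PConst
  | plus : Pol PVar PConst → Pol PVar PConst → Pol PVar PConst
  | times : Pol PVar PConst → Pol PVar PConst → Pol PVar PConst
  | bang : Pol PVar PConst → Pol PVar PConst

/-- Formulas of JA-STIT. -/
inductive Form (Ag PVar PConst PropVar : Type) : Type
  | pv : PropVar → Form Ag PVar PConst PropVar
  | and : Form Ag PVar PConst PropVar → Form Ag PVar PConst PropVar →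
      Form Ag PVar PConst PropVar
  | neg : Form Ag PVar PConst PropVar → Form Ag PVar PConst PropVar
  | stit : Ag → Form Ag PVar PConst PropVar → Form Ag PVar PConst PropVar
  | box : Form Ag PVar PConst PropVar → Form Ag PVar PConst PropVar
  | proves : Pol PVar PConst → Form Ag PVar PConst PropVar → Form Ag PVar PConst PropVar
  | know : Form Ag PVar PConst PropVar → Form Ag PVar PConst PropVar
  | ann : Pol PVar PConst → Form Ag PVar PConst PropVar

namespace Form

variable {Ag PVar PConst PropVar : Type}

/-- Implication, defined as usual from `¬` and `∧`. -/
def imp (A B : Form Ag PVar PConst PropVar) : Form Ag PVar PConst PropVar :=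
  neg (and A (neg B))

/-- Disjunction, defined as usual. -/
def or (A B : Form Ag PVar PConst PropVar) : Form Ag PVar PConst PropVar :=
  neg (and (neg A) (neg B))

/-- The dual `◇` of the historical necessity modality. -/
def dia (A : Form Ag PVar PConst PropVar) : Form Ag PVar PConst PropVar :=
  neg (box (neg A))

/-- Falsum, defined as usual. -/
def bot [Inhabited PropVar] : Form Ag PVar PConst PropVar :=
  and (pv default) (neg (pv default))

end Form

/-- Conjunction of a nonempty list of formulas (head plus tail). -/
def andList {Ag PVar PConst PropVar : Type} :
    Form Ag PVar PConst PropVar → List (Form Ag PVar PConst PropVar) →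
      Form Ag PVar PConst PropVar
  | A, [] => A
  | A, B :: L => Form.and A (andList B L)

/-- Disjunction of a list of formulas. -/
def bigOr {Ag PVar PConst PropVar : Type} [Inhabited PropVar] :
    List (Form Ag PVar PConst PropVar) → Form Ag PVar PConst PropVar
  | [] => Form.bot
  | [A] => A
  | A :: B :: L => Form.or A (bigOr (B :: L))

/-- A classical propositional tautology: a formula true under every Boolean valuation
commuting with `∧` and `¬` (all other formulas being treated as atoms). -/
def Tautology {Ag PVar PConst PropVar : Type} (A : Form Ag PVar PConst PropVar) : Prop :=
  ∀ v : Form Ag PVar PConst PropVar → Bool,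
    (∀ B C, v (Form.and B C) = (v B && v C)) →
    (∀ B, v (Form.neg B) = !v B) →
    v A = true

/-- The axiom schemes (A0)–(A9) of Σ_D. -/
inductive Ax {Ag PVar PConst PropVar : Type} : Form Ag PVar PConst PropVar → Prop
  -- (A0) classical propositional tautologies
  | a0 {A} : Tautology A → Ax A
  -- (A1) S5 axioms for □
  | boxK {A B} : Ax (Form.imp (Form.box (Form.imp A B))
      (Form.imp (Form.box A) (Form.box B)))
  | boxT {A} : Ax (Form.imp (Form.box A) A)
  | box4 {A} : Ax (Form.imp (Form.box A) (Form.box (Form.box A)))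
  | box5 {A} : Ax (Form.imp (Form.neg (Form.box A)) (Form.box (Form.neg (Form.box A))))
  -- (A1) S5 axioms for each [j]
  | stitK {j : Ag} {A B} : Ax (Form.imp (Form.stit j (Form.imp A B))
      (Form.imp (Form.stit j A) (Form.stit j B)))
  | stitT {j : Ag} {A} : Ax (Form.imp (Form.stit j A) A)
  | stit4 {j : Ag} {A} : Ax (Form.imp (Form.stit j A) (Form.stit j (Form.stit j A)))
  | stit5 {j : Ag} {A} : Ax (Form.imp (Form.neg (Form.stit j A))
      (Form.stit j (Form.neg (Form.stit j A))))
  -- (A2)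
  | a2 {j : Ag} {A} : Ax (Form.imp (Form.box A) (Form.stit j A))
  -- (A3), for pairwise distinct agents
  | a3 {p : Ag × Form Ag PVar PConst PropVar} {L : List (Ag × Form Ag PVar PConst PropVar)} :
      (((p :: L).map Prod.fst).Nodup) →
      Ax (Form.imp
        (andList (Form.dia (Form.stit p.1 p.2)) (L.map fun q => Form.dia (Form.stit q.1 q.2)))
        (Form.dia (andList (Form.stit p.1 p.2) (L.map fun q => Form.stit q.1 q.2))))
  -- (A4)
  | a4 {s t : Pol PVar PConst} {A B} : Ax (Form.imp (Form.proves s (Form.imp A B))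
      (Form.imp (Form.proves t A) (Form.proves (Pol.times s t) B)))
  -- (A5)
  | a5 {t : Pol PVar PConst} {A} : Ax (Form.imp (Form.proves t A)
      (Form.and (Form.proves (Pol.bang t) (Form.proves t A)) (Form.know A)))
  -- (A6)
  | a6 {s t : Pol PVar PConst} {A} : Ax (Form.imp
      (Form.or (Form.proves s A) (Form.proves t A)) (Form.proves (Pol.plus s t) A))
  -- (A7) S4 axioms for K
  | knowK {A B} : Ax (Form.imp (Form.know (Form.imp A B))
      (Form.imp (Form.know A) (Form.know B)))
  | knowT {A} : Ax (Form.imp (Form.know A) A)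
  | know4 {A} : Ax (Form.imp (Form.know A) (Form.know (Form.know A)))
  -- (A8)
  | a8 {A} : Ax (Form.imp (Form.know A) (Form.box (Form.know (Form.box A))))
  -- (A9)
  | a9 {t : Pol PVar PConst} : Ax (Form.imp (Form.box (Form.ann t))
      (Form.know (Form.box (Form.ann t))))

/-- Iterated prefixes `c_n : … : c_1 : A` of instances `A` of the axiom schemes. -/
inductive ConstIter {Ag PVar PConst PropVar : Type} : Form Ag PVar PConst PropVar → Prop
  | base {c : PConst} {A} : Ax A → ConstIter (Form.proves (Pol.const c) A)
  | step {c : PConst} {B} : ConstIter B → ConstIter (Form.proves (Pol.const c) B)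

/-- A constant specification: a set of formulas of the form `c_n : … : c_1 : A` with `A`
an instance of (A0)–(A9), closed under deleting the outermost constant. -/
def IsConstSpec {Ag PVar PConst PropVar : Type}
    (CS : Set (Form Ag PVar PConst PropVar)) : Prop :=
  (∀ B ∈ CS, ConstIter B) ∧
  ∀ (c c' : PConst) (B : Form Ag PVar PConst PropVar),
    Form.proves (Pol.const c) (Form.proves (Pol.const c') B) ∈ CS →
    Form.proves (Pol.const c') B ∈ CS

/-- Provability in Σ_D(CS): axioms (A0)–(A9), modus ponens (R1), K-necessitation (R2),
the rule (R_D) and the rule (R_CS). -/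
inductive Proves {Ag PVar PConst PropVar : Type} [Inhabited PropVar]
    (CS : Set (Form Ag PVar PConst PropVar)) : Form Ag PVar PConst PropVar → Prop
  | ax {A} : Ax A → Proves CS A
  | mp {A B} : Proves CS (Form.imp A B) → Proves CS A → Proves CS B
  | nec {A} : Proves CS A → Proves CS (Form.know A)
  | rd {A : Form Ag PVar PConst PropVar} {ts ss : List (Pol PVar PConst)}
      (hne : ts ++ ss ≠ []) :
      Proves CS (Form.imp (Form.know A)
        (bigOr ((ts.map fun t => Form.neg (Form.box (Form.ann t))) ++
                (ss.map fun s => Form.box (Form.ann s))))) →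
      Proves CS (Form.imp (Form.know A)
        (bigOr ((ts.map fun t => Form.neg (Form.ann t)) ++
                (ss.map fun s => Form.ann s))))
  | rcs {B} : B ∈ CS → Proves CS B

/-- Γ is consistent in Σ_D(CS): no finite nonempty conjunction of members of Γ provably
implies falsum. -/
def CSConsistent {Ag PVar PConst PropVar : Type} [Inhabited PropVar]
    (CS Γ : Set (Form Ag PVar PConst PropVar)) : Prop :=
  ¬ ∃ (A : Form Ag PVar PConst PropVar) (L : List (Form Ag PVar PConst PropVar)),
      A ∈ Γ ∧ (∀ B ∈ L, B ∈ Γ) ∧ Proves CS (Form.imp (andList A L) Form.bot)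

/-- A jstit model for `Ag`: a jstit frame together with `Act`, an admissible evidence
function `E` and an evaluation `V`, subject to the semantical constraints. -/
structure JstitModel (Mo : Type) (Ag PVar PConst PropVar : Type)
    extends JstitFrame Mo Ag where
  act : Mo → Set Mo → Set (Pol PVar PConst)
  ev : Mo → Pol PVar PConst → Set (Form Ag PVar PConst PropVar)
  val : PropVar → Set (Mo × Set Mo)
  -- monotonicity of evidence
  ev_mono : ∀ m m' t, Re m m' → ev m t ⊆ ev m' t
  -- evidence closure properties
  ev_app : ∀ m s t A B, Form.imp A B ∈ ev m s → A ∈ ev m t → B ∈ ev m (Pol.times s t)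
  ev_sum_left : ∀ m s t, ev m s ⊆ ev m (Pol.plus s t)
  ev_sum_right : ∀ m s t, ev m t ⊆ ev m (Pol.plus s t)
  ev_bang : ∀ m t A, A ∈ ev m t → Form.proves t A ∈ ev m (Pol.bang t)
  -- expansion of presented proofs
  expansion : ∀ m m' h, toTemporalFrame.lt m' m → h ∈ toTemporalFrame.H m →
    act m' h ⊆ act m h
  -- no new proofs guaranteed
  no_new : ∀ m t, (∀ h ∈ toTemporalFrame.H m, t ∈ act m h) →
    ∃ m' h, toTemporalFrame.lt m' m ∧ h ∈ toTemporalFrame.H m ∧ t ∈ act m' h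
  -- presenting a new proof makes histories divide
  divide : ∀ m h h', h ∈ toTemporalFrame.H m → h' ∈ toTemporalFrame.H m →
    toTemporalFrame.Undiv m h h' → act m h = act m h'
  -- presented proofs are epistemically transparent
  transparent : ∀ m m' t, Re m m' → (∀ h ∈ toTemporalFrame.H m, t ∈ act m h) →
    ∀ h' ∈ toTemporalFrame.H m', t ∈ act m' h'

namespace JstitModel

variable {Mo Ag PVar PConst PropVar : Type}

/-- `Act_m`, the set of proofs presented at `m` under every history through `m`. -/
def ActM (M : JstitModel Mo Ag PVar PConst PropVar) (m : Mo) : Set (Pol PVar PConst) :=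
  { t | ∀ h ∈ M.toTemporalFrame.H m, t ∈ M.act m h }

/-- The satisfaction relation for jstit models. -/
def Sat (M : JstitModel Mo Ag PVar PConst PropVar) :
    Form Ag PVar PConst PropVar → Mo → Set Mo → Prop
  | Form.pv p, m, h => (m, h) ∈ M.val p
  | Form.and A B, m, h => M.Sat A m h ∧ M.Sat B m h
  | Form.neg A, m, h => ¬ M.Sat A m h
  | Form.stit j A, m, h => ∀ h' C, C ∈ M.choice m j → h ∈ C → h' ∈ C → M.Sat A m h'
  | Form.box A, m, _ => ∀ h' ∈ M.toTemporalFrame.H m, M.Sat A m h'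
  | Form.know A, m, _ => ∀ m' h', M.R m m' → h' ∈ M.toTemporalFrame.H m' → M.Sat A m' h'
  | Form.proves t A, m, _ => A ∈ M.ev m t ∧
      ∀ m' h', M.Re m m' → h' ∈ M.toTemporalFrame.H m' → M.Sat A m' h'
  | Form.ann t, m, h => t ∈ M.act m h

/-- Validity of a formula in a jstit model. -/
def Valid (M : JstitModel Mo Ag PVar PConst PropVar)
    (A : Form Ag PVar PConst PropVar) : Prop :=
  ∀ m h, h ∈ M.toTemporalFrame.H m → M.Sat A m h

end JstitModel

/-- CS-normality of a jstit model. -/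
def CSNormal {Mo Ag PVar PConst PropVar : Type}
    (CS : Set (Form Ag PVar PConst PropVar))
    (M : JstitModel Mo Ag PVar PConst PropVar) : Prop :=
  ∀ (c : PConst) (m : Mo) (A : Form Ag PVar PConst PropVar),
    Form.proves (Pol.const c) A ∈ CS → A ∈ M.ev m (Pol.const c)


/-
Soundness under regularity is by induction on derivations, and only rule (R_D) needs regularity.
Suppose its premise is valid, but at `(m, h)` we have `KA`, every `tᵢ` presented and no `sⱼ`
presented. The premise at `m` yields some `t` presented at `m` on `h` but not on another history
`g₀`. If `h` goes beyond `m`, through `m₁` say, the set of moments at which `t` is presented on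
every history lies in `Θ_{m₀}` for all `m₀ ∈ (m, m₁]` and, with `g₀`, satisfies the antecedent of
regularity. So `m` has an immediate successor `m₂ ⊴ m₁`, and the premise at `m₂` contradicts the
situation at `m`, because by "no new proofs guaranteed" what is presented at `m₂` on every history
was already presented at `m` on `h`. If `h` ends at `m`, then `g₀ = h`.

Conversely, from a failure of regularity at `m ⊲ m₁` witnessed by `S` and `h'`, build a model on
the frame presenting `t` at `(x, g)` when `m ⊴ x` and `g` passes through `(m, m₁]`, and presenting
every proof at `(x, g)` when `x ∈ S` or the immediate successor of `x` on `g` lies in `S`. The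
closure conditions defining `Θ` force `x ∈ S` wherever `□Et` holds, so `K(□Et → □Es)` holds at
`m`, while `Et ∧ ¬Es` holds at `m` on a history through `m₁`: an instance of (R_D) fails.
-/

namespace TemporalFrame

variable {Mo : Type} {T : TemporalFrame Mo}

theorem IsHistory.le_or_le {h : Set Mo} (hh : T.IsHistory h) {a b : Mo} (ha : a ∈ h)
    (hb : b ∈ h) : T.le a b ∨ T.le b a := by
  rcases eq_or_ne a b with rfl | hne
  · exact Or.inl (T.le_refl a)
  · exact hh.1 ha hb hne

theorem IsHistory.mem_of_isChain_insert {h : Set Mo} (hh : T.IsHistory h) {z : Mo}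
    (hz : IsChain T.le (insert z h)) : z ∈ h :=
  hh.2 _ hz (Set.subset_insert z h) ▸ Set.mem_insert z h

theorem IsHistory.mem_of_le {h : Set Mo} (hh : T.IsHistory h) {y z : Mo} (hz : z ∈ h)
    (hyz : T.le y z) : y ∈ h :=
  hh.mem_of_isChain_insert <| hh.1.insert fun w hw _ =>
    (hh.le_or_le hw hz).elim (T.no_backward z y w hyz) fun hzw => Or.inl (T.le_trans hyz hzw)

theorem IsHistory.mem_of_forall_le {h : Set Mo} (hh : T.IsHistory h) {z : Mo}
    (hz : ∀ y ∈ h, T.le y z) : z ∈ h :=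
  hh.mem_of_isChain_insert <| hh.1.insert fun y hy _ => Or.inr (hz y hy)

variable (T) in
theorem exists_mem_H (x : Mo) : ∃ h, h ∈ T.H x := by
  obtain ⟨h, hmax, hx⟩ := (IsChain.singleton (r := T.le) (a := x)).exists_maxChain
  exact ⟨h, ⟨hmax.1, fun h' hch hsub => (hmax.2 hch hsub).symm⟩, hx rfl⟩

theorem mem_H_of_le {x y : Mo} {g : Set Mo} (hg : g ∈ T.H y) (hxy : T.le x y) : g ∈ T.H x :=
  ⟨hg.1, hg.1.mem_of_le hg.2 hxy⟩

theorem lt_of_le_of_lt {a b c : Mo} (hab : T.le a b) (hbc : T.lt b c) : T.lt a c := by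
  refine ⟨T.le_trans hab hbc.1, ?_⟩
  rintro rfl
  exact hbc.2 (T.le_antisymm hbc.1 hab)

theorem Next.le_of_lt {x w z : Mo} {g : Set Mo} (hxw : T.Next x w) (hg : T.IsHistory g)
    (hw : w ∈ g) (hz : z ∈ g) (hxz : T.lt x z) : T.le w z := by
  rcases hg.le_or_le hw hz with hwz | hzw
  · exact hwz
  rcases eq_or_ne z w with rfl | hne
  · exact T.le_refl z
  · exact absurd (T.le_antisymm hxz.1 (hxw.2 z ⟨hzw, hne⟩)) hxz.2

theorem next_of_forall_not_lt {x' x : Mo} (hlt : T.lt x' x)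
    (hgap : ∀ y, T.lt x' y → ¬ T.lt y x) : T.Next x' x := by
  refine ⟨hlt, fun z hz => ?_⟩
  rcases T.no_backward x z x' hz.1 hlt.1 with hzx' | hx'z
  · exact hzx'
  rcases eq_or_ne x' z with rfl | hne
  · exact T.le_refl x'
  · exact absurd hz (hgap z ⟨hx'z, hne⟩)

theorem eq_of_mem_H_of_forall_not_lt {m : Mo} {h g : Set Mo} (hh : h ∈ T.H m) (hg : g ∈ T.H m)
    (hmax : ∀ y ∈ h, ¬ T.lt m y) : g = h := by
  have hle : ∀ y ∈ h, T.le y m := by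
    intro y hy
    rcases hh.1.le_or_le hy hh.2 with hym | hmy
    · exact hym
    rcases eq_or_ne m y with rfl | hne
    · exact T.le_refl m
    · exact absurd ⟨hmy, hne⟩ (hmax y hy)
  have hsub : g ⊆ h := by
    intro z hz
    rcases hg.1.le_or_le hz hg.2 with hzm | hmz
    · exact hh.1.mem_of_le hh.2 hzm
    · exact hh.1.mem_of_forall_le fun y hy => T.le_trans (hle y hy) hmz
  exact (hg.1.2 h hh.1.1 hsub).symm

variable (T) in
def MeetsIoc (m m1 : Mo) (g : Set Mo) : Prop := ∃ y ∈ g, T.lt m y ∧ T.le y m1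

variable (T) in
def AtOrNextIn (S : Set Mo) (x : Mo) (g : Set Mo) : Prop :=
  x ∈ S ∨ ∃ w ∈ g, T.Next x w ∧ w ∈ S

theorem MeetsIoc.of_undiv {m m1 x : Mo} {g g' : Set Mo} (hmx : T.le m x) (hg : T.IsHistory g)
    (hg' : T.IsHistory g') (hu : T.Undiv x g g') : T.MeetsIoc m m1 g → T.MeetsIoc m m1 g' := by
  rintro ⟨y, hyg, hmy, hym1⟩
  obtain ⟨u, hxu, hug, hug'⟩ := hu
  rcases hg.le_or_le hyg hug with hyu | huy
  · exact ⟨y, hg'.mem_of_le hug' hyu, hmy, hym1⟩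
  · exact ⟨u, hug', T.lt_of_le_of_lt hmx hxu, T.le_trans huy hym1⟩

theorem AtOrNextIn.of_undiv {S g g' : Set Mo} {x : Mo} (hg : T.IsHistory g)
    (hg' : T.IsHistory g') (hu : T.Undiv x g g') : T.AtOrNextIn S x g → T.AtOrNextIn S x g' := by
  rintro (hx | ⟨w, hwg, hn, hwS⟩)
  · exact Or.inl hx
  · obtain ⟨u, hxu, hug, hug'⟩ := hu
    exact Or.inr ⟨w, hg'.mem_of_le hug' (hn.le_of_lt hg hwg hug hxu), hn, hwS⟩

theorem AtOrNextIn.mem_of_lt {S g : Set Mo} {x' x : Mo}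
    (hS : ∀ a b, a ∈ S → T.le a b → b ∈ S) (hg : T.IsHistory g) (hx : x ∈ g)
    (hlt : T.lt x' x) : T.AtOrNextIn S x' g → x ∈ S := by
  rintro (hx' | ⟨w, hwg, hn, hwS⟩)
  · exact hS _ _ hx' hlt.1
  · exact hS _ _ hwS (hn.le_of_lt hg hwg hx hlt)

theorem exists_lt_forall_atOrNextIn {S : Set Mo} {x : Mo}
    (hS : ∀ x, x ∈ S → (∀ x', T.lt x' x → ∃ y, T.lt x' y ∧ T.lt y x) →
      ∃ x', T.lt x' x ∧ x' ∈ S)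
    (hx : x ∈ S) : ∃ x', T.lt x' x ∧ ∀ g ∈ T.H x, T.AtOrNextIn S x' g := by
  by_cases hdense : ∀ x', T.lt x' x → ∃ y, T.lt x' y ∧ T.lt y x
  · obtain ⟨x', hx'x, hx'⟩ := hS x hx hdense
    exact ⟨x', hx'x, fun _ _ => Or.inl hx'⟩
  · push Not at hdense
    obtain ⟨x', hx'x, hgap⟩ := hdense
    exact ⟨x', hx'x, fun g hg => Or.inr ⟨x, hg.2, T.next_of_forall_not_lt hx'x hgap, hx⟩⟩

end TemporalFrame

namespace JstitModel

variable {Mo Ag PVar PConst PropVar : Type} (M : JstitModel Mo Ag PVar PConst PropVar)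
  {m : Mo} {h : Set Mo}

theorem sat_imp {A B : Form Ag PVar PConst PropVar} :
    M.Sat (Form.imp A B) m h ↔ (M.Sat A m h → M.Sat B m h) := by
  simp only [Form.imp, Sat]
  tauto

theorem sat_or {A B : Form Ag PVar PConst PropVar} :
    M.Sat (Form.or A B) m h ↔ (M.Sat A m h ∨ M.Sat B m h) := by
  simp only [Form.or, Sat]
  tauto

theorem not_sat_bot [Inhabited PropVar] :
    ¬ M.Sat (Form.bot : Form Ag PVar PConst PropVar) m h := by
  simp only [Form.bot, Sat]
  tauto

theorem sat_dia {A : Form Ag PVar PConst PropVar} :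
    M.Sat (Form.dia A) m h ↔ ∃ g ∈ M.H m, M.Sat A m g := by
  simp only [Form.dia, Sat]
  push Not
  rfl

theorem sat_andList {A : Form Ag PVar PConst PropVar} {L : List (Form Ag PVar PConst PropVar)} :
    M.Sat (andList A L) m h ↔ M.Sat A m h ∧ ∀ B ∈ L, M.Sat B m h := by
  induction L generalizing A with
  | nil => simp [andList]
  | cons B L ih => simp [andList, Sat, ih]

theorem sat_bigOr [Inhabited PropVar] {L : List (Form Ag PVar PConst PropVar)} :
    M.Sat (bigOr L) m h ↔ ∃ B ∈ L, M.Sat B m h := by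
  induction L with
  | nil => simpa [bigOr] using M.not_sat_bot
  | cons A L ih =>
    cases L with
    | nil => simp [bigOr]
    | cons B L => simp [bigOr, sat_or, ih]

theorem sat_of_tautology {A : Form Ag PVar PConst PropVar} (hA : Tautology A) : M.Sat A m h := by
  classical
  refine of_decide_eq_true (hA (fun B => decide (M.Sat B m h)) (fun B C => ?_) (fun B => ?_))
  · by_cases hB : M.Sat B m h <;> by_cases hC : M.Sat C m h <;> simp [Sat, hB, hC]
  · by_cases hB : M.Sat B m h <;> simp [Sat, hB]

theorem sat_stit_of_mem_choice {j : Ag} {A : Form Ag PVar PConst PropVar} {C : Set (Set Mo)}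
    (hC : C ∈ M.choice m j) {g g' : Set Mo} (hg : g ∈ C) (hg' : g' ∈ C)
    (hsat : M.Sat (Form.stit j A) m g) : M.Sat (Form.stit j A) m g' := by
  intro h' C' hC' hg'C' hh'C'
  obtain rfl := M.choice_disjoint m j C C' hC hC' ⟨g', hg', hg'C'⟩
  exact hsat h' C hC hg hh'C'

theorem exists_sat_stit_of_nodup {p : Ag × Form Ag PVar PConst PropVar}
    {L : List (Ag × Form Ag PVar PConst PropVar)} (hnd : ((p :: L).map Prod.fst).Nodup)
    (hex : ∀ q ∈ p :: L, ∃ g ∈ M.H m, M.Sat (Form.stit q.1 q.2) m g) :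
    ∃ g ∈ M.H m, ∀ q ∈ p :: L, M.Sat (Form.stit q.1 q.2) m g := by
  obtain ⟨gp, hgp, -⟩ := hex p List.mem_cons_self
  have hcell : ∀ j : Ag, ∃ C ∈ M.choice m j,
      ∀ q ∈ p :: L, q.1 = j → ∃ g ∈ C, M.Sat (Form.stit q.1 q.2) m g := by
    intro j
    by_cases hj : ∃ q ∈ p :: L, q.1 = j
    · obtain ⟨q, hq, rfl⟩ := hj
      obtain ⟨g, hg, hsat⟩ := hex q hq
      obtain ⟨C, hC, hgC⟩ := M.choice_cover m q.1 g hg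
      refine ⟨C, hC, fun q' hq' hq'q => ?_⟩
      obtain rfl := List.inj_on_of_nodup_map hnd hq' hq hq'q
      exact ⟨g, hgC, hsat⟩
    · obtain ⟨C, hC, -⟩ := M.choice_cover m j gp hgp
      exact ⟨C, hC, fun q hq hqj => absurd ⟨q, hq, hqj⟩ hj⟩
  choose f hf hfsat using hcell
  obtain ⟨g, hg⟩ := M.independence m f hf
  have hgf : ∀ j, g ∈ f j := Set.mem_iInter.1 hg
  refine ⟨g, M.choice_cell_sub m p.1 _ (hf p.1) (hgf p.1), fun q hq => ?_⟩
  obtain ⟨g', hg', hsat⟩ := hfsat q.1 q hq rfl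
  exact M.sat_stit_of_mem_choice (hf q.1) hg' (hgf q.1) hsat

theorem sat_dia_andList_stit_of_nodup {p : Ag × Form Ag PVar PConst PropVar}
    {L : List (Ag × Form Ag PVar PConst PropVar)} (hnd : ((p :: L).map Prod.fst).Nodup)
    (hprem : M.Sat (andList (Form.dia (Form.stit p.1 p.2))
      (L.map fun q => Form.dia (Form.stit q.1 q.2))) m h) :
    M.Sat (Form.dia (andList (Form.stit p.1 p.2) (L.map fun q => Form.stit q.1 q.2))) m h := by
  obtain ⟨hp, hL⟩ := M.sat_andList.1 hprem
  have hex : ∀ q ∈ p :: L, ∃ g ∈ M.H m, M.Sat (Form.stit q.1 q.2) m g :=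
    List.forall_mem_cons.2
      ⟨M.sat_dia.1 hp, fun q hq => M.sat_dia.1 (hL _ (List.mem_map_of_mem hq))⟩
  obtain ⟨g, hg, hsat⟩ := M.exists_sat_stit_of_nodup hnd hex
  refine M.sat_dia.2 ⟨g, hg, M.sat_andList.2 ⟨hsat p List.mem_cons_self, ?_⟩⟩
  exact List.forall_mem_map.2 fun q hq => hsat q (List.mem_cons_of_mem p hq)

theorem sat_of_ax {A : Form Ag PVar PConst PropVar} (hA : Ax A) (hh : h ∈ M.H m) :
    M.Sat A m h := by
  cases hA with
  | a0 hA => exact M.sat_of_tautology hA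
  | a3 hnd => exact M.sat_imp.2 (M.sat_dia_andList_stit_of_nodup hnd)
  | boxK =>
    simp only [sat_imp, Sat]
    exact fun hAB hA h' hh' => hAB h' hh' (hA h' hh')
  | stitK =>
    simp only [sat_imp, Sat]
    exact fun hAB hA h' C hC hhC hh'C => hAB h' C hC hhC hh'C (hA h' C hC hhC hh'C)
  | knowK =>
    simp only [sat_imp, Sat]
    exact fun hAB hA m' h' hR hh' => hAB m' h' hR hh' (hA m' h' hR hh')
  | boxT => exact M.sat_imp.2 fun hA => hA h hh
  | box4 | box5 | a8 => simp only [sat_imp, Sat]; tauto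
  | stitT =>
    obtain ⟨C, hC, hhC⟩ := M.choice_cover m _ h hh
    exact M.sat_imp.2 fun hA => hA h C hC hhC hhC
  | stit4 =>
    exact M.sat_imp.2 fun hA h' C hC hhC hh'C => M.sat_stit_of_mem_choice hC hhC hh'C hA
  | stit5 =>
    exact M.sat_imp.2 fun hA h' C hC hhC hh'C hA' => hA (M.sat_stit_of_mem_choice hC hh'C hhC hA')
  | a2 =>
    exact M.sat_imp.2 fun hA h' C hC _ hh'C => hA h' (M.choice_cell_sub m _ C hC hh'C)
  | a4 =>
    simp only [sat_imp, Sat]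
    exact fun ⟨hev, hsat⟩ ⟨hev', hsat'⟩ => ⟨M.ev_app _ _ _ _ _ hev hev',
      fun m' h' hRe hh' => hsat m' h' hRe hh' (hsat' m' h' hRe hh')⟩
  | a5 =>
    simp only [sat_imp, Sat]
    exact fun ⟨hev, hsat⟩ => ⟨⟨M.ev_bang _ _ _ hev, fun m' _ hRe _ => ⟨M.ev_mono _ _ _ hRe hev,
      fun m'' h'' hRe' hh'' => hsat m'' h'' (M.Re_trans hRe hRe') hh''⟩⟩,
      fun m' h' hR hh' => hsat m' h' (M.R_sub_Re hR) hh'⟩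
  | a6 =>
    simp only [sat_imp, sat_or, Sat]
    rintro (⟨hev, hsat⟩ | ⟨hev, hsat⟩)
    · exact ⟨M.ev_sum_left _ _ _ hev, hsat⟩
    · exact ⟨M.ev_sum_right _ _ _ hev, hsat⟩
  | knowT => exact M.sat_imp.2 fun hA => hA m h (M.R_refl m) hh
  | know4 =>
    exact M.sat_imp.2 fun hA m' _ hR _ m'' h'' hR' hh'' => hA m'' h'' (M.R_trans hR hR') hh''
  | a9 =>
    exact M.sat_imp.2 fun ht m' _ hR _ => M.transparent m m' _ (M.R_sub_Re hR) ht

theorem mem_act_of_le {x' x : Mo} {g : Set Mo} {t : Pol PVar PConst} (hle : M.le x' x)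
    (hg : g ∈ M.H x) (ht : t ∈ M.act x' g) : t ∈ M.act x g := by
  rcases eq_or_ne x' x with rfl | hne
  · exact ht
  · exact M.expansion x x' g ⟨hle, hne⟩ hg ht

theorem mem_actM_of_mem_act_of_lt {x y : Mo} {g : Set Mo} {t : Pol PVar PConst}
    (ht : t ∈ M.act x g) (hg : g ∈ M.H x) (hxy : M.lt x y) (hy : y ∈ g) : t ∈ M.ActM y := by
  intro g' hg'
  have hg'x : g' ∈ M.H x := TemporalFrame.mem_H_of_le hg' hxy.1
  rw [← M.divide x g' g hg'x hg ⟨y, hxy, hg'.2, hy⟩] at ht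
  exact M.mem_act_of_le hxy.1 hg' ht

theorem mem_act_of_next {x w : Mo} {g : Set Mo} {t : Pol PVar PConst} (hn : M.Next x w)
    (ht : t ∈ M.ActM w) (hg : g ∈ M.H w) : t ∈ M.act x g := by
  obtain ⟨x', g', hx'w, hg', ht'⟩ := M.no_new w t ht
  have hg'x : g' ∈ M.H x := TemporalFrame.mem_H_of_le hg' hn.1.1
  have ht'' := M.mem_act_of_le (hn.2 x' hx'w) hg'x ht'
  have hgx : g ∈ M.H x := TemporalFrame.mem_H_of_le hg hn.1.1
  rwa [M.divide x g' g hg'x hgx ⟨w, hn.1, hg'.2, hg.2⟩] at ht''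

theorem setOf_mem_actM_mem_Theta {m0 : Mo} {t : Pol PVar PConst} (ht : t ∈ M.ActM m0) :
    {x | t ∈ M.ActM x} ∈ M.Theta m0 := by
  refine ⟨ht, fun x y hx hRe => M.transparent x y t hRe hx, fun x hx g hg => ?_,
    fun x hx hdense => ?_⟩
  · obtain ⟨w, hwg, hn, hw⟩ := hx g hg
    exact M.mem_act_of_next hn hw ⟨hg.1, hwg⟩
  · obtain ⟨x', g, hx'x, hg, ht'⟩ := M.no_new x t hx
    obtain ⟨y, hx'y, hyx⟩ := hdense x' hx'x
    exact ⟨y, hyx, M.mem_actM_of_mem_act_of_lt ht' (TemporalFrame.mem_H_of_le hg hx'x.1) hx'y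
      (hg.1.mem_of_le hg.2 hyx.1)⟩

theorem exists_next_of_regular (hreg : M.Regular) {m1 : Mo} {g0 : Set Mo}
    {t : Pol PVar PConst} (hh : h ∈ M.H m) (hm1 : m1 ∈ h) (hlt : M.lt m m1)
    (ht : t ∈ M.act m h) (hg0 : g0 ∈ M.H m) (hg0t : t ∉ M.act m g0) :
    ∃ m2, M.le m2 m1 ∧ M.Next m m2 := by
  refine hreg m m1 hlt ⟨{x | t ∈ M.ActM x}, fun m0 hm0 hm01 => M.setOf_mem_actM_mem_Theta
    (M.mem_actM_of_mem_act_of_lt ht hh hm0 (hh.1.mem_of_le hm1 hm01)),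
    fun hm => hg0t (hm g0 hg0), g0, hg0, ?_,
    fun w hw hn hwS => hg0t (M.mem_act_of_next hn hwS ⟨hg0.1, hw⟩)⟩
  rintro g hg hu
  have hgm : g ∈ M.H m := TemporalFrame.mem_H_of_le hg hlt.1
  rw [M.divide m g0 g hg0 hgm hu, M.divide m g h hgm hh ⟨m1, hlt, hg.2, hm1⟩] at hg0t
  exact hg0t ht

theorem exists_not_mem_act_or_mem_act (hreg : M.Regular) {ts ss : List (Pol PVar PConst)}
    (hh : h ∈ M.H m)
    (hD : ∀ x, M.R m x → (∃ t ∈ ts, t ∉ M.ActM x) ∨ ∃ s ∈ ss, s ∈ M.ActM x) :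
    (∃ t ∈ ts, t ∉ M.act m h) ∨ ∃ s ∈ ss, s ∈ M.act m h := by
  by_contra hcon
  push Not at hcon
  obtain ⟨hts, hss⟩ := hcon
  rcases hD m (M.R_refl m) with ⟨t, ht, htm⟩ | ⟨s, hs, hsm⟩
  swap
  · exact hss s hs (hsm h hh)
  obtain ⟨g0, hg0, hg0t⟩ : ∃ g0 ∈ M.H m, t ∉ M.act m g0 := by
    simpa [ActM] using htm
  by_cases hmax : ∀ m1 ∈ h, ¬ M.lt m m1
  · exact hg0t (TemporalFrame.eq_of_mem_H_of_forall_not_lt hh hg0 hmax ▸ hts t ht)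
  push Not at hmax
  obtain ⟨m1, hm1, hlt⟩ := hmax
  obtain ⟨m2, hm21, hn⟩ := M.exists_next_of_regular hreg hh hm1 hlt (hts t ht) hg0 hg0t
  have hm2 : h ∈ M.H m2 := ⟨hh.1, hh.1.mem_of_le hm1 hm21⟩
  rcases hD m2 (M.le_sub_R hn.1.1) with ⟨t', ht', ht'm2⟩ | ⟨s, hs, hsm2⟩
  · exact ht'm2 (M.mem_actM_of_mem_act_of_lt (hts t' ht') hh hn.1 hm2.2)
  · exact hss s hs (M.mem_act_of_next hn hsm2 hm2)

theorem sat_bigOr_ann [Inhabited PropVar] {ts ss : List (Pol PVar PConst)} :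
    M.Sat (bigOr ((ts.map fun t => Form.neg (Form.ann t)) ++ ss.map fun s => Form.ann s) :
        Form Ag PVar PConst PropVar) m h ↔
      (∃ t ∈ ts, t ∉ M.act m h) ∨ ∃ s ∈ ss, s ∈ M.act m h := by
  simp [sat_bigOr, Sat, or_and_right, exists_or]

theorem sat_bigOr_box_ann [Inhabited PropVar] {ts ss : List (Pol PVar PConst)} :
    M.Sat (bigOr ((ts.map fun t => Form.neg (Form.box (Form.ann t))) ++
        ss.map fun s => Form.box (Form.ann s)) : Form Ag PVar PConst PropVar) m h ↔
      (∃ t ∈ ts, t ∉ M.ActM m) ∨ ∃ s ∈ ss, s ∈ M.ActM m := by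
  simp [sat_bigOr, Sat, ActM, or_and_right, exists_or]

theorem valid_of_constIter {CS : Set (Form Ag PVar PConst PropVar)} (hCS : IsConstSpec CS)
    (hnorm : CSNormal CS M) {B : Form Ag PVar PConst PropVar} (hB : ConstIter B) :
    B ∈ CS → M.Valid B := by
  induction hB with
  | @base c A hA =>
    exact fun hcs m _ _ => ⟨hnorm c m A hcs, fun _ _ _ hh' => M.sat_of_ax hA hh'⟩
  | @step c B hB ih =>
    intro hcs m _ _
    have hBCS : B ∈ CS := by cases hB <;> exact hCS.2 _ _ _ hcs
    exact ⟨hnorm c m B hcs, fun m' h' _ hh' => ih hBCS m' h' hh'⟩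

theorem valid_of_proves [Inhabited PropVar] {CS : Set (Form Ag PVar PConst PropVar)}
    (hCS : IsConstSpec CS) (hnorm : CSNormal CS M) (hreg : M.Regular)
    {A : Form Ag PVar PConst PropVar} (hA : Proves CS A) : M.Valid A := by
  induction hA with
  | ax hA => exact fun m h hh => M.sat_of_ax hA hh
  | mp _ _ ihAB ihA => exact fun m h hh => M.sat_imp.1 (ihAB m h hh) (ihA m h hh)
  | nec _ ih => exact fun m h _ m' h' _ hh' => ih m' h' hh'
  | rcs hB => exact M.valid_of_constIter hCS hnorm (hCS.1 _ hB) hB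
  | rd _ _ ih =>
    refine fun m h hh => M.sat_imp.2 fun hKA => M.sat_bigOr_ann.2 ?_
    refine M.exists_not_mem_act_or_mem_act hreg hh fun x hx => ?_
    obtain ⟨g, hg⟩ := M.exists_mem_H x
    exact (M.sat_bigOr_box_ann (h := g)).1 <| M.sat_imp.1 (ih x g hg)
      fun m' h' hR hh' => hKA m' h' (M.R_trans hx hR) hh'

end JstitModel

namespace JstitFrame

variable {Mo Ag PVar PConst : Type} (F : JstitFrame Mo Ag)

/-- `¬ F.Regular`, unpacked at a pair `m ⊲ m1`. -/
structure RegularityFailure (m m1 : Mo) (S h' : Set Mo) : Prop where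
  lt : F.lt m m1
  mem_Theta : ∀ m0, F.lt m m0 → F.le m0 m1 → S ∈ F.Theta m0
  not_mem : m ∉ S
  mem_H : h' ∈ F.H m
  not_undiv : ∀ g ∈ F.H m1, ¬ F.Undiv m h' g
  not_mem_of_next : ∀ m' ∈ h', F.Next m m' → m' ∉ S
  not_next : ∀ m2, F.le m2 m1 → ¬ F.Next m m2

theorem exists_regularityFailure_of_not_regular (hreg : ¬ F.Regular) :
    ∃ m m1 S h', F.RegularityFailure m m1 S h' := by
  simp only [Regular, not_forall, exists_prop] at hreg
  obtain ⟨m, m1, hlt, ⟨S, hS, hmS, h', hh', hsep, hnext⟩, hnot⟩ := hreg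
  exact ⟨m, m1, S, h', hlt, hS, hmS, hh', hsep, hnext, fun m2 hm2 hn => hnot ⟨m2, hm2, hn⟩⟩

def counterAct (m m1 : Mo) (S : Set Mo) (t : Pol PVar PConst) (x : Mo) (g : Set Mo) :
    Set (Pol PVar PConst) :=
  {q | (q = t ∧ F.le m x ∧ F.MeetsIoc m m1 g) ∨ F.AtOrNextIn S x g}

variable {F} {m m1 : Mo} {S h' : Set Mo}

theorem counterAct_subset_of_undiv {t : Pol PVar PConst} {x : Mo} {g g' : Set Mo}
    (hg : g ∈ F.H x) (hg' : g' ∈ F.H x) (hu : F.Undiv x g g') :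
    F.counterAct m m1 S t x g ⊆ F.counterAct m m1 S t x g' := by
  rintro q (⟨rfl, hmx, hmeet⟩ | hq)
  · exact Or.inl ⟨rfl, hmx, hmeet.of_undiv hmx hg.1 hg'.1 hu⟩
  · exact Or.inr (hq.of_undiv hg.1 hg'.1 hu)

namespace RegularityFailure

theorem mem_of_lt_of_le (hF : F.RegularityFailure m m1 S h') {x : Mo} (hmx : F.lt m x)
    (hxm1 : F.le x m1) : x ∈ S :=
  (hF.mem_Theta x hmx hxm1).1

theorem mem_Theta_m1 (hF : F.RegularityFailure m m1 S h') : S ∈ F.Theta m1 :=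
  hF.mem_Theta m1 hF.lt (F.le_refl m1)

theorem mem_of_le (hF : F.RegularityFailure m m1 S h') {x y : Mo} (hx : x ∈ S)
    (hxy : F.le x y) : y ∈ S :=
  hF.mem_Theta_m1.2.1 x y hx (F.R_sub_Re (F.le_sub_R hxy))

theorem not_meetsIoc (hF : F.RegularityFailure m m1 S h') : ¬ F.MeetsIoc m m1 h' := by
  rintro ⟨y, hy, hmy, hym1⟩
  obtain ⟨g, hg⟩ := F.exists_mem_H m1
  exact hF.not_undiv g hg ⟨y, hmy, hy, hg.1.mem_of_le hg.2 hym1⟩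

theorem mem_of_forall_mem_counterAct (hF : F.RegularityFailure m m1 S h')
    {t q : Pol PVar PConst} {x : Mo} (hx : ∀ g ∈ F.H x, q ∈ F.counterAct m m1 S t x g) :
    x ∈ S := by
  by_contra hxS
  rcases eq_or_ne x m with rfl | hxm
  · rcases hx h' hF.mem_H with ⟨-, -, hmeet⟩ | hmS | ⟨w, hw, hn, hwS⟩
    · exact hF.not_meetsIoc hmeet
    · exact hF.not_mem hmS
    · exact hF.not_mem_of_next w hw hn hwS
  refine hxS (hF.mem_Theta_m1.2.2.1 x fun g hg => ?_)
  rcases hx g hg with ⟨-, hmx, y, hyg, hmy, hym1⟩ | hxS' | hnext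
  · rcases hg.1.le_or_le hyg hg.2 with hyx | hxy
    · exact absurd (hF.mem_of_le (hF.mem_of_lt_of_le hmy hym1) hyx) hxS
    · exact absurd (hF.mem_of_lt_of_le ⟨hmx, hxm.symm⟩ (F.le_trans hxy hym1)) hxS
  · exact absurd hxS' hxS
  · exact hnext

theorem counterAct_subset_of_lt (hF : F.RegularityFailure m m1 S h') {t : Pol PVar PConst}
    {x' x : Mo} {g : Set Mo} (hlt : F.lt x' x) (hg : g ∈ F.H x) :
    F.counterAct m m1 S t x' g ⊆ F.counterAct m m1 S t x g := by
  rintro q (⟨rfl, hmx', hmeet⟩ | hq)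
  · exact Or.inl ⟨rfl, F.le_trans hmx' hlt.1, hmeet⟩
  · exact Or.inr (Or.inl (hq.mem_of_lt (fun _ _ => hF.mem_of_le) hg.1 hg.2 hlt))

theorem exists_lt_mem_counterAct (hF : F.RegularityFailure m m1 S h') (t q : Pol PVar PConst)
    {x : Mo} (hx : x ∈ S) :
    ∃ x' g, F.lt x' x ∧ g ∈ F.H x ∧ q ∈ F.counterAct m m1 S t x' g := by
  obtain ⟨x', hx'x, hx'⟩ := TemporalFrame.exists_lt_forall_atOrNextIn hF.mem_Theta_m1.2.2.2 hx
  obtain ⟨g, hg⟩ := F.exists_mem_H x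
  exact ⟨x', g, hx'x, hg, Or.inr (hx' g hg)⟩

def counterModel {PropVar : Type} (hF : F.RegularityFailure m m1 S h') (t : Pol PVar PConst) :
    JstitModel Mo Ag PVar PConst PropVar where
  toJstitFrame := F
  act := F.counterAct m m1 S t
  ev _ _ := Set.univ
  val _ := ∅
  ev_mono _ _ _ _ := Set.subset_univ _
  ev_app _ _ _ _ _ _ _ := Set.mem_univ _
  ev_sum_left _ _ _ := Set.subset_univ _
  ev_sum_right _ _ _ := Set.subset_univ _
  ev_bang _ _ _ _ := Set.mem_univ _
  expansion _ _ _ hlt hg := hF.counterAct_subset_of_lt hlt hg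
  no_new _ q hq := hF.exists_lt_mem_counterAct t q (hF.mem_of_forall_mem_counterAct hq)
  divide _ _ _ hg hg' hu := (counterAct_subset_of_undiv hg hg' hu).antisymm
    (counterAct_subset_of_undiv hg' hg (hu.imp fun _ ⟨hxu, hu, hu'⟩ => ⟨hxu, hu', hu⟩))
  transparent x x' _ hRe hq _ _ :=
    Or.inr (Or.inl (hF.mem_Theta_m1.2.1 x x' (hF.mem_of_forall_mem_counterAct hq) hRe))

theorem not_valid_counterModel [Inhabited PropVar] (hF : F.RegularityFailure m m1 S h')
    {t s : Pol PVar PConst} (hst : s ≠ t) :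
    ¬ (hF.counterModel t : JstitModel Mo Ag PVar PConst PropVar).Valid
      (Form.imp (Form.know (Form.imp (Form.box (Form.ann t)) (Form.box (Form.ann s))))
        (bigOr [Form.neg (Form.ann t), Form.ann s])) := by
  intro hvalid
  obtain ⟨h, hh⟩ := F.exists_mem_H m1
  have hhm : h ∈ F.H m := TemporalFrame.mem_H_of_le hh hF.lt.1
  have hK : (hF.counterModel t : JstitModel Mo Ag PVar PConst PropVar).Sat
      (Form.know (Form.imp (Form.box (Form.ann t)) (Form.box (Form.ann s)))) m h :=
    fun x _ _ _ => JstitModel.sat_imp _ |>.2 fun ht _ _ =>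
      Or.inr (Or.inl (hF.mem_of_forall_mem_counterAct ht))
  rcases (JstitModel.sat_or _).1 (JstitModel.sat_imp _ |>.1 (hvalid m h hhm) hK) with hnt | hs
  · exact hnt (Or.inl ⟨rfl, F.le_refl m, m1, hh.2, hF.lt, F.le_refl m1⟩)
  · rcases hs with ⟨rfl, -⟩ | hmS | ⟨w, hw, hn, -⟩
    · exact hst rfl
    · exact hF.not_mem hmS
    · exact hF.not_next w (hn.le_of_lt hh.1 hw hh.2 hF.lt) hn

end RegularityFailure

end JstitFrame

theorem tautology_imp_imp_or {Ag PVar PConst PropVar : Type} (K P Q : Form Ag PVar PConst PropVar) :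
    Tautology (Form.imp (Form.imp K (Form.imp P Q)) (Form.imp K (Form.or (Form.neg P) Q))) := by
  intro v hand hneg
  simp only [Form.imp, Form.or, hand, hneg]
  cases v K <;> cases v P <;> cases v Q <;> rfl

theorem proves_know_imp_not_ann_or_ann {Ag PVar PConst PropVar : Type} [Inhabited PropVar]
    (CS : Set (Form Ag PVar PConst PropVar)) (t s : Pol PVar PConst) :
    Proves CS (Form.imp (Form.know (Form.imp (Form.box (Form.ann t)) (Form.box (Form.ann s))))
      (bigOr [Form.neg (Form.ann t), Form.ann s])) :=
  Proves.rd (ts := [t]) (ss := [s]) (by simp)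
    (Proves.mp (Proves.ax (Ax.a0 (tautology_imp_imp_or _ _ _))) (Proves.ax Ax.knowT))

theorem stmt16_general {Mo Ag PVar PConst PropVar : Type}
    [Infinite PVar] [Inhabited PropVar]
    (F : JstitFrame Mo Ag)
    (CS : Set (Form Ag PVar PConst PropVar)) (hCS : IsConstSpec CS) :
    (∀ M : JstitModel Mo Ag PVar PConst PropVar,
        M.toJstitFrame = F → CSNormal CS M →
        ∀ A : Form Ag PVar PConst PropVar, Proves CS A → M.Valid A) ↔
      F.Regular := by
  refine ⟨fun hsound => ?_,
    fun hreg M hMF hnorm A hA => M.valid_of_proves hCS hnorm (hMF ▸ hreg) hA⟩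
  by_contra hreg
  obtain ⟨m, m1, S, h', hF⟩ := F.exists_regularityFailure_of_not_regular hreg
  obtain ⟨a, b, hab⟩ := exists_pair_ne PVar
  exact hF.not_valid_counterModel (t := Pol.var a) (s := Pol.var b)
    (fun e => hab (Pol.var.inj e).symm)
    (hsound _ rfl (fun _ _ _ _ => Set.mem_univ _) _ (proves_know_imp_not_ann_or_ann CS _ _))

/-- Theorem 7: every CS-normal jstit model based on a jstit frame `F`
validates all theorems of Σ_D(CS) iff `F` is regular. -/
theorem stmt16 {Mo Ag PVar PConst PropVar : Type} [Finite Ag]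
    [Countable PVar] [Infinite PVar] [Countable PConst] [Infinite PConst]
    [Countable PropVar] [Infinite PropVar] [Inhabited PropVar]
    (F : JstitFrame Mo Ag)
    (CS : Set (Form Ag PVar PConst PropVar)) (hCS : IsConstSpec CS) :
    (∀ M : JstitModel Mo Ag PVar PConst PropVar,
        M.toJstitFrame = F → CSNormal CS M →
        ∀ A : Form Ag PVar PConst PropVar, Proves CS A → M.Valid A) ↔
      F.Regular :=
  stmt16_general F CS hCS
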